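/- M-step for the variances: let d ≥ 1, let γ₁, …, γ_b ≥ 0 with ∑_i γ_i > 0, let μ_{x_1},…,μ_{x_b} ∈ ℝ^d and σ_{x_1},…,σ_{x_b} ∈ (0,∞)^d be given, and fix μ ∈ ℝ^d. Then the function σ² ↦ ∑_{i∈[b]} γ_i·D_KL( N(μ_{x_i}, diag(σ_{x_i}²)) ‖ N(μ, diag(σ²)) ) over σ ∈ (0,∞)^d is uniquely minimized coordinatewise at σ*ⱼ² = ( ∑_{i∈[b]} γ_i·( σ_{x_i,j}² + (μ_{x_i,j} − μ_j)² ) ) / ( ∑_{i∈[b]} γ_i ) for each j ∈ [d]. -/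

import Mathlib

open Real

noncomputable section

/-- Closed-form KL divergence between `d`-dimensional Gaussians with diagonal covariances:
`D_KL(N(m₁, diag(s₁²)) ‖ N(m₂, diag(s₂²)))
  = ∑ⱼ [ log(s₂ⱼ/s₁ⱼ) + (s₁ⱼ² + (m₁ⱼ−m₂ⱼ)²)/(2 s₂ⱼ²) − 1/2 ]`. -/
def gaussKL {d : ℕ} (m₁ s₁ m₂ s₂ : Fin d → ℝ) : ℝ :=
  ∑ j, (Real.log (s₂ j / s₁ j) + (s₁ j ^ 2 + (m₁ j - m₂ j) ^ 2) / (2 * s₂ j ^ 2) - 1 / 2)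

/-- **M-step for the variances:** for nonnegative weights `γᵢ` with positive sum and a fixed
component mean `μ`, the weighted sum of KL divergences
`σ² ↦ ∑ᵢ γᵢ·D_KL(N(μ_{xᵢ}, diag(σ_{xᵢ}²)) ‖ N(μ, diag(σ²)))` over `σ ∈ (0,∞)^d` is uniquely
minimized coordinatewise at `σ*ⱼ² = (∑ᵢ γᵢ(σ_{xᵢ,j}² + (μ_{xᵢ,j}−μⱼ)²))/(∑ᵢ γᵢ)`. -/
theorem mstep_variances
    (d b : ℕ) (hd : 1 ≤ d) (γ : Fin b → ℝ) (hγ : ∀ i, 0 ≤ γ i) (hγsum : 0 < ∑ i, γ i)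
    (μx : Fin b → Fin d → ℝ) (σx : Fin b → Fin d → ℝ) (hσx : ∀ i j, 0 < σx i j)
    (μ : Fin d → ℝ)
    (σstar : Fin d → ℝ) (hσstar : ∀ j, 0 < σstar j)
    (hσstarsq : ∀ j, σstar j ^ 2 =
      (∑ i, γ i * (σx i j ^ 2 + (μx i j - μ j) ^ 2)) / ∑ i, γ i) :
    (∀ σ : Fin d → ℝ, (∀ j, 0 < σ j) →
        ∑ i, γ i * gaussKL (μx i) (σx i) μ σstar ≤
          ∑ i, γ i * gaussKL (μx i) (σx i) μ σ) ∧
      (∀ σ : Fin d → ℝ, (∀ j, 0 < σ j) →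
        (∑ i, γ i * gaussKL (μx i) (σx i) μ σ) =
            (∑ i, γ i * gaussKL (μx i) (σx i) μ σstar) →
          ∀ j, σ j ^ 2 = σstar j ^ 2) := by
  set S : ℝ := ∑ i, γ i with hS
  have hS0 : S ≠ 0 := ne_of_gt hγsum
  have key : ∀ x : ℝ, 0 < x → 0 ≤ x - 1 - Real.log x := by
    intro x hx
    have := Real.log_le_sub_one_of_pos hx
    linarith
  have key' : ∀ x : ℝ, 0 < x → x - 1 - Real.log x = 0 → x = 1 := by
    intro x hx h
    by_contra hne
    have := Real.log_lt_sub_one_of_pos hx hne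
    linarith
  -- main identity
  have main : ∀ σ : Fin d → ℝ, (∀ j, 0 < σ j) →
      (∑ i, γ i * gaussKL (μx i) (σx i) μ σ) - (∑ i, γ i * gaussKL (μx i) (σx i) μ σstar)
      = ∑ j, (S / 2) * ((σstar j ^ 2) / (σ j ^ 2) - 1 -
          Real.log ((σstar j ^ 2) / (σ j ^ 2))) := by
    intro σ hσ
    unfold gaussKL
    simp only [Finset.mul_sum]
    have swap : ∀ f : Fin b → Fin d → ℝ, ∑ i, ∑ j, f i j = ∑ j, ∑ i, f i j :=
      fun f => Finset.sum_comm
    rw [swap, swap, ← Finset.sum_sub_distrib]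
    refine Finset.sum_congr rfl fun j _ => ?_
    have hsj := hσ j
    have hstj := hσstar j
    have hsj0 : σ j ≠ 0 := ne_of_gt hsj
    have hstj0 : σstar j ≠ 0 := ne_of_gt hstj
    have hC : (∑ i, γ i * (σx i j ^ 2 + (μx i j - μ j) ^ 2)) = σstar j ^ 2 * S := by
      have := hσstarsq j
      field_simp at this
      linarith [this]
    have step1 :
        (∑ i, γ i * (Real.log (σ j / σx i j) +
            (σx i j ^ 2 + (μx i j - μ j) ^ 2) / (2 * σ j ^ 2) - 1 / 2)) -
        (∑ i, γ i * (Real.log (σstar j / σx i j) +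
            (σx i j ^ 2 + (μx i j - μ j) ^ 2) / (2 * σstar j ^ 2) - 1 / 2)) =
        (Real.log (σ j) - Real.log (σstar j)) * S +
          (1 / (2 * σ j ^ 2) - 1 / (2 * σstar j ^ 2)) *
            (∑ i, γ i * (σx i j ^ 2 + (μx i j - μ j) ^ 2)) := by
      rw [hS, Finset.mul_sum, Finset.mul_sum, ← Finset.sum_sub_distrib, ← Finset.sum_add_distrib]
      refine Finset.sum_congr rfl fun i _ => ?_
      have hxi : σx i j ≠ 0 := ne_of_gt (hσx i j)
      rw [Real.log_div hsj0 hxi, Real.log_div hstj0 hxi]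
      ring
    rw [step1, hC]
    have hlog : Real.log ((σstar j ^ 2) / (σ j ^ 2)) =
        2 * Real.log (σstar j) - 2 * Real.log (σ j) := by
      rw [Real.log_div (pow_ne_zero _ hstj0) (pow_ne_zero _ hsj0),
        Real.log_pow, Real.log_pow]
      push_cast; ring
    rw [hlog]
    have h1 : σ j ^ 2 ≠ 0 := pow_ne_zero _ hsj0
    have h2 : σstar j ^ 2 ≠ 0 := pow_ne_zero _ hstj0
    field_simp
    ring
  have nonneg : ∀ σ : Fin d → ℝ, (∀ j, 0 < σ j) → ∀ j : Fin d,
      0 ≤ (S / 2) * ((σstar j ^ 2) / (σ j ^ 2) - 1 -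
          Real.log ((σstar j ^ 2) / (σ j ^ 2))) := by
    intro σ hσ j
    have hx : 0 < (σstar j ^ 2) / (σ j ^ 2) :=
      div_pos (pow_pos (hσstar j) 2) (pow_pos (hσ j) 2)
    have := key _ hx
    positivity
  constructor
  · intro σ hσ
    have h := main σ hσ
    have h2 : 0 ≤ ∑ j, (S / 2) * ((σstar j ^ 2) / (σ j ^ 2) - 1 -
        Real.log ((σstar j ^ 2) / (σ j ^ 2))) :=
      Finset.sum_nonneg fun j _ => nonneg σ hσ j
    linarith
  · intro σ hσ heq j
    have h := main σ hσ
    rw [heq, sub_self] at h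
    have hall := (Finset.sum_eq_zero_iff_of_nonneg
      (fun j _ => nonneg σ hσ j)).mp h.symm j (Finset.mem_univ j)
    have hx : 0 < (σstar j ^ 2) / (σ j ^ 2) :=
      div_pos (pow_pos (hσstar j) 2) (pow_pos (hσ j) 2)
    have hz : (σstar j ^ 2) / (σ j ^ 2) - 1 -
        Real.log ((σstar j ^ 2) / (σ j ^ 2)) = 0 := by
      have hS2 : S / 2 ≠ 0 := by positivity
      exact (mul_eq_zero.mp hall).resolve_left hS2
    have h1 := key' _ hx hz
    have h2 : σ j ^ 2 ≠ 0 := pow_ne_zero _ (ne_of_gt (hσ j))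
    field_simp at h1
    exact ((div_eq_one_iff_eq h2).mp h1).symm

end
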